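/- arXiv:2404.02620 — 7 statements merged into one kernel-verified Lean document; each statement's English description precedes it below -/
import Mathlib

section
/- Let A be an n×m real matrix with n ≥ 2, let D = D(A) be its (n−1)×m payoff difference matrix, let D̄ = D̄(A) and b = (0,…,0,1)ᵀ ∈ ℝⁿ. Then there exists a vector x ∈ ℝᵐ with x ≥ 0 componentwise such that D̄x = b if and only if there does not exist a vector w ∈ ℝ^{n−1} such that every entry of wᵀD is strictly positive. -/
/-- The payoff difference matrix `D(A)`: row `k` is row `k` of `A` minus row `k+1`. -/
def Dmat {n m : ℕ} (A : Matrix (Fin (n + 1)) (Fin m) ℝ) :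
    Matrix (Fin n) (Fin m) ℝ :=
  fun k i => A k.castSucc i - A k.succ i

/-- The matrix `D̄(A)`: equal to `D(A)` in its first `n-1` rows, with an all-ones last row. -/
def Dbar {n m : ℕ} (A : Matrix (Fin (n + 1)) (Fin m) ℝ) :
    Matrix (Fin (n + 1)) (Fin m) ℝ :=
  fun k => Fin.lastCases (fun _ => (1 : ℝ)) (fun k i => Dmat A k i) k

/-- The vector `b = (0, …, 0, 1)ᵀ`. -/
def bvec (n : ℕ) : Fin (n + 1) → ℝ := fun j => if j = Fin.last n then 1 else 0

/-!
With `x ≥ 0`, the equation `D̄x = b` says exactly that `x` lies in the standard simplex and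
`Dx = 0`, so the theorem is Gordan's alternative for `D`. If `Dx = 0` then `(wᵀD)x = wᵀ(Dx) = 0`,
impossible when `wᵀD > 0` and `x` is in the simplex. Conversely, if no point of the simplex is
sent to `0`, its image under `D` is a compact convex set avoiding `0`; a functional separating it
from `0`, written as `x ↦ wᵀx`, is positive at every column of `D`, i.e. `wᵀD > 0`.
-/

open Matrix

theorem apply_eq_dotProduct_apply_single {R F ι : Type*} [CommSemiring R] [Fintype ι]
    [DecidableEq ι] [FunLike F (ι → R) R] [LinearMapClass F R (ι → R) R] (g : F) (v : ι → R) :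
    g v = v ⬝ᵥ fun i => g (Pi.single i 1) := by
  conv_lhs => rw [← Finset.univ_sum_single v]
  simp only [map_sum, dotProduct]
  refine Finset.sum_congr rfl fun i _ => ?_
  rw [← smul_eq_mul, ← map_smul, ← Pi.single_smul', smul_eq_mul, mul_one]

section Gordan

variable {ι κ : Type*} [Fintype ι] [Fintype κ]

theorem dotProduct_pos_of_mem_stdSimplex {v x : κ → ℝ} (hv : ∀ j, 0 < v j)
    (hx : x ∈ stdSimplex ℝ κ) : 0 < v ⬝ᵥ x := by
  obtain ⟨j, hj⟩ : ∃ j, 0 < x j := by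
    by_contra! h
    simpa [le_antisymm (h _) (hx.1 _)] using hx.2
  exact Finset.sum_pos' (fun i _ => mul_nonneg (hv i).le (hx.1 i))
    ⟨j, Finset.mem_univ j, mul_pos (hv j) hj⟩

theorem not_exists_vecMul_pos_of_mulVec_eq_zero {M : Matrix ι κ ℝ} {x : κ → ℝ}
    (hx : x ∈ stdSimplex ℝ κ) (hMx : M *ᵥ x = 0) : ¬ ∃ w : ι → ℝ, ∀ j, 0 < (w ᵥ* M) j := by
  rintro ⟨w, hw⟩
  have := dotProduct_pos_of_mem_stdSimplex hw hx
  rw [← dotProduct_mulVec, hMx, dotProduct_zero] at this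
  exact this.false

theorem exists_vecMul_pos_of_forall_mulVec_ne_zero {M : Matrix ι κ ℝ}
    (h : ∀ x ∈ stdSimplex ℝ κ, M *ᵥ x ≠ 0) : ∃ w : ι → ℝ, ∀ j, 0 < (w ᵥ* M) j := by
  classical
  set S := M.mulVecLin '' stdSimplex ℝ κ
  have hS : IsCompact S :=
    (isCompact_stdSimplex ℝ κ).image M.mulVecLin.continuous_of_finiteDimensional
  have h0 : (0 : ι → ℝ) ∉ S := fun ⟨x, hx, hMx⟩ => h x hx hMx
  obtain ⟨g, u, hg0, hgS⟩ := geometric_hahn_banach_point_closed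
    ((convex_stdSimplex ℝ κ).linear_image M.mulVecLin) hS.isClosed h0
  refine ⟨fun i => g (Pi.single i 1), fun j => ?_⟩
  have hj : u < g (M.col j) := by
    simpa [mulVec_single_one] using hgS _ ⟨_, single_mem_stdSimplex ℝ j, rfl⟩
  rw [map_zero] at hg0
  rw [apply_eq_dotProduct_apply_single g] at hj
  simpa [vecMul, dotProduct, mul_comm] using hg0.trans hj

theorem exists_mem_stdSimplex_mulVec_eq_zero_iff (M : Matrix ι κ ℝ) :
    (∃ x ∈ stdSimplex ℝ κ, M *ᵥ x = 0) ↔ ¬ ∃ w : ι → ℝ, ∀ j, 0 < (w ᵥ* M) j := by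
  refine ⟨fun ⟨x, hx, hMx⟩ => not_exists_vecMul_pos_of_mulVec_eq_zero hx hMx, fun h => ?_⟩
  by_contra! hM
  exact h (exists_vecMul_pos_of_forall_mulVec_ne_zero hM)

end Gordan

theorem Dbar_mulVec {n m : ℕ} (A : Matrix (Fin (n + 1)) (Fin m) ℝ) (x : Fin m → ℝ) :
    Dbar A *ᵥ x = Fin.snoc (Dmat A *ᵥ x) (∑ i, x i) := by
  ext k
  induction k using Fin.lastCases <;> simp [Dbar, mulVec, dotProduct]

theorem bvec_eq_snoc (n : ℕ) : bvec n = Fin.snoc 0 1 := by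
  ext k
  induction k using Fin.lastCases <;> simp [bvec, (Fin.castSucc_lt_last _).ne]

theorem Dbar_mulVec_eq_bvec_iff {n m : ℕ} (A : Matrix (Fin (n + 1)) (Fin m) ℝ) (x : Fin m → ℝ) :
    Dbar A *ᵥ x = bvec n ↔ Dmat A *ᵥ x = 0 ∧ ∑ i, x i = 1 := by
  rw [Dbar_mulVec, bvec_eq_snoc, Fin.snoc_inj]

/-- For an `n × m` payoff matrix `A` with `n ≥ 2` (here `n = n' + 2`), there exists
`x ≥ 0` with `D̄x = b` if and only if there is no `w ∈ ℝ^{n-1}` with every entry of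
`wᵀD` strictly positive. -/
theorem farkas_characterization {n' m : ℕ} (A : Matrix (Fin (n' + 2)) (Fin m) ℝ) :
    (∃ x : Fin m → ℝ, (∀ i, 0 ≤ x i) ∧ (Dbar A).mulVec x = bvec (n' + 1)) ↔
      ¬ ∃ w : Fin (n' + 1) → ℝ, ∀ i : Fin m, 0 < Matrix.vecMul w (Dmat A) i := by
  rw [← exists_mem_stdSimplex_mulVec_eq_zero_iff]
  refine exists_congr fun x => ?_
  rw [Dbar_mulVec_eq_bvec_iff]
  exact ⟨fun ⟨h0, hMx, h1⟩ => ⟨⟨h0, h1⟩, hMx⟩, fun ⟨⟨h0, h1⟩, hMx⟩ => ⟨h0, hMx, h1⟩⟩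
end

section
/- Consider a finite two-player game in which player 1 has n₁ pure strategies and payoff matrix A₁ (an n₁×n₂ real matrix, entry (j,i) being player 1's payoff from pure strategy j against the opponent's pure strategy i) and player 2 has n₂ pure strategies and payoff matrix A₂ (an n₂×n₁ real matrix defined analogously), with n₁, n₂ ≥ 2. If the game has a completely mixed Nash equilibrium (x, y), then for each player i ∈ {1,2} and for every vector v ∈ ℝ^{nᵢ−1} there exists a column d of the payoff difference matrix D(Aᵢ) with vᵀd ≤ 0; that is, HS(D(Aᵢ)) = ℝ^{nᵢ−1} for both i = 1, 2. -/
/-- Membership in the standard simplex of `ℝᵏ`. -/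
def InSimplex {k : ℕ} (x : Fin k → ℝ) : Prop :=
  (∀ i, 0 ≤ x i) ∧ ∑ i, x i = 1

/-- `(x, y)` is a Nash equilibrium of the bimatrix game with payoff matrices
`A₁` (for player 1) and `A₂` (for player 2). -/
def IsNash {n₁ n₂ : ℕ} (A₁ : Matrix (Fin n₁) (Fin n₂) ℝ)
    (A₂ : Matrix (Fin n₂) (Fin n₁) ℝ) (x : Fin n₁ → ℝ) (y : Fin n₂ → ℝ) : Prop :=
  InSimplex x ∧ InSimplex y ∧
    (∀ x' : Fin n₁ → ℝ, InSimplex x' → dotProduct x' (A₁.mulVec y) ≤ dotProduct x (A₁.mulVec y)) ∧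
    (∀ y' : Fin n₂ → ℝ, InSimplex y' → dotProduct y' (A₂.mulVec x) ≤ dotProduct y (A₂.mulVec x))

open Matrix

theorem InSimplex.single {k : ℕ} (j : Fin k) : InSimplex (Pi.single j (1 : ℝ)) := by
  refine ⟨fun i => ?_, by simp⟩
  by_cases h : i = j <;> simp [h]

theorem InSimplex.ne_zero {k : ℕ} {x : Fin k → ℝ} (hx : InSimplex x) : x ≠ 0 := by
  rintro rfl
  simpa using hx.2

section Indifference

variable {n : ℕ} {x w : Fin n → ℝ}

theorem apply_le_dotProduct_of_isMaxOn (hmax : IsMaxOn (· ⬝ᵥ w) {x' | InSimplex x'} x)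
    (j : Fin n) : w j ≤ x ⬝ᵥ w := by
  simpa using hmax (InSimplex.single j)

theorem apply_eq_dotProduct_of_isMaxOn (hx : InSimplex x) (hpos : ∀ j, 0 < x j)
    (hmax : IsMaxOn (· ⬝ᵥ w) {x' | InSimplex x'} x) (j : Fin n) : w j = x ⬝ᵥ w := by
  set c := x ⬝ᵥ w
  have hgap : ∀ i ∈ Finset.univ, 0 ≤ x i * (c - w i) := fun i _ =>
    mul_nonneg (hpos i).le (sub_nonneg.2 (apply_le_dotProduct_of_isMaxOn hmax i))
  have hsum : ∑ i, x i * (c - w i) = 0 := by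
    simp only [mul_sub, Finset.sum_sub_distrib, ← Finset.sum_mul, hx.2, one_mul]
    exact sub_self c
  have hj := (Finset.sum_eq_zero_iff_of_nonneg hgap).1 hsum j (Finset.mem_univ j)
  linarith [(mul_eq_zero.1 hj).resolve_left (hpos j).ne']

end Indifference

theorem exists_nonpos_of_dotProduct_eq_zero {ι : Type*} [Fintype ι] {u y : ι → ℝ}
    (hy : ∀ i, 0 ≤ y i) (hy₀ : y ≠ 0) (h : u ⬝ᵥ y = 0) : ∃ i, u i ≤ 0 := by
  by_contra! hu
  obtain ⟨i, hi⟩ := Function.ne_iff.1 hy₀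
  have : 0 < u ⬝ᵥ y := Finset.sum_pos' (fun j _ => mul_nonneg (hu j).le (hy j))
    ⟨i, Finset.mem_univ i, mul_pos (hu i) (lt_of_le_of_ne (hy i) (Ne.symm hi))⟩
  exact this.ne' h

theorem Dmat_mulVec_eq_zero {n m : ℕ} {A : Matrix (Fin (n + 1)) (Fin m) ℝ} {y : Fin m → ℝ}
    {c : ℝ} (hc : ∀ j, (A *ᵥ y) j = c) : Dmat A *ᵥ y = 0 := by
  funext k
  have hk : (Dmat A *ᵥ y) k = (A *ᵥ y) k.castSucc - (A *ᵥ y) k.succ := by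
    simp only [mulVec, dotProduct, Dmat, sub_mul, Finset.sum_sub_distrib]
  rw [hk, hc, hc, sub_self, Pi.zero_apply]

theorem exists_column_nonpos_of_mulVec_eq_const {n m : ℕ} (A : Matrix (Fin (n + 1)) (Fin m) ℝ)
    {y : Fin m → ℝ} (hy : ∀ i, 0 ≤ y i) (hy₀ : y ≠ 0) {c : ℝ} (hc : ∀ j, (A *ᵥ y) j = c)
    (v : Fin n → ℝ) : ∃ i, ∑ k, v k * Dmat A k i ≤ 0 :=
  exists_nonpos_of_dotProduct_eq_zero (u := v ᵥ* Dmat A) hy hy₀ <| by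
    rw [← dotProduct_mulVec, Dmat_mulVec_eq_zero hc, dotProduct_zero]

/-- If a bimatrix game (with `nᵢ ≥ 2` pure strategies for player `i`, here `nᵢ = nᵢ' + 2`)
has a completely mixed Nash equilibrium, then for each player `i` the union of the half
spaces induced by the columns of `D(Aᵢ)` covers `ℝ^{nᵢ - 1}`: for every `v` there is a
column `d` of `D(Aᵢ)` with `vᵀd ≤ 0`. -/
theorem completely_mixed_nash_implies_halfspace_cover {n₁' n₂' : ℕ}
    (A₁ : Matrix (Fin (n₁' + 2)) (Fin (n₂' + 2)) ℝ)
    (A₂ : Matrix (Fin (n₂' + 2)) (Fin (n₁' + 2)) ℝ)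
    (x : Fin (n₁' + 2) → ℝ) (y : Fin (n₂' + 2) → ℝ)
    (hNash : IsNash A₁ A₂ x y)
    (hx : ∀ j, 0 < x j) (hy : ∀ i, 0 < y i) :
    (∀ v : Fin (n₁' + 1) → ℝ, ∃ i : Fin (n₂' + 2), ∑ k, v k * Dmat A₁ k i ≤ 0) ∧
    (∀ v : Fin (n₂' + 1) → ℝ, ∃ i : Fin (n₁' + 2), ∑ k, v k * Dmat A₂ k i ≤ 0) := by
  obtain ⟨hxs, hys, hbr₁, hbr₂⟩ := hNash
  exact ⟨exists_column_nonpos_of_mulVec_eq_const A₁ hys.1 hys.ne_zero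
      (apply_eq_dotProduct_of_isMaxOn hxs hx hbr₁),
    exists_column_nonpos_of_mulVec_eq_const A₂ hxs.1 hxs.ne_zero
      (apply_eq_dotProduct_of_isMaxOn hys hy hbr₂)⟩
end

section
/- Let a₁, a₂, a₃ ∈ (0,1) and let A₁ = [[0, 1, a₃], [a₁, 0, 1], [1, a₂, 0]]. Then the symmetric game with payoff matrix A₁ has exactly one symmetric Nash equilibrium x in the standard simplex of ℝ³, and this x has all three coordinates strictly positive. -/
/-!
An equilibrium `y` of the game `A₁` is completely mixed. If `y₀ = 0`, pure strategy 0 earns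
`y₁ + a₃ y₂`, strictly more than the `a₂ y₁` of strategy 2, so strategy 2 is unused too; then
`y = e₁`, against which strategy 0 earns `1` while `y` earns `0`. The cyclic relabelling
`j ↦ j + 1` turns `A₁(a₁, a₂, a₃)` into `A₁(a₂, a₃, a₁)`, which handles the other coordinates.
A completely mixed equilibrium equalizes the three pure payoffs, and with `∑ yⱼ = 1` this linear
system has a unique solution, proportional to the weights `w` for which `A₁ w` is constant.
-/

/-- `x` is a symmetric Nash equilibrium of the symmetric game with payoff matrix `A`:
`x` lies in the standard simplex of `ℝ³` and `xᵀAx ≥ yᵀAx` for all `y` in the simplex. -/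
def IsSymNash (A : Matrix (Fin 3) (Fin 3) ℝ) (x : Fin 3 → ℝ) : Prop :=
  (∀ j, 0 ≤ x j) ∧ (∑ j, x j = 1) ∧
    ∀ y : Fin 3 → ℝ, (∀ j, 0 ≤ y j) → (∑ j, y j = 1) →
      dotProduct y (A.mulVec x) ≤ dotProduct x (A.mulVec x)

open Matrix

namespace IsSymNash

variable {A : Matrix (Fin 3) (Fin 3) ℝ} {x : Fin 3 → ℝ}

theorem of_mulVec_eq_const (hx₀ : ∀ j, 0 ≤ x j) (hx₁ : ∑ j, x j = 1) {c : ℝ}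
    (hc : A *ᵥ x = fun _ => c) : IsSymNash A x := by
  have hconst : ∀ y : Fin 3 → ℝ, ∑ j, y j = 1 → y ⬝ᵥ (A *ᵥ x) = c := fun y hy => by
    simp only [hc, dotProduct, ← Finset.sum_mul, hy, one_mul]
  exact ⟨hx₀, hx₁, fun y _ hy => by rw [hconst y hy, hconst x hx₁]⟩

theorem mulVec_le (h : IsSymNash A x) (j : Fin 3) : (A *ᵥ x) j ≤ x ⬝ᵥ (A *ᵥ x) := by
  have hj : (0 : Fin 3 → ℝ) ≤ Pi.single j 1 := Pi.single_nonneg.2 zero_le_one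
  simpa using h.2.2 (Pi.single j 1) hj (by simp)

theorem mulVec_eq_of_pos (h : IsSymNash A x) {j : Fin 3} (hj : 0 < x j) :
    (A *ᵥ x) j = x ⬝ᵥ (A *ᵥ x) := by
  set V := x ⬝ᵥ (A *ᵥ x)
  have hgap : ∀ i ∈ Finset.univ, 0 ≤ x i * (V - (A *ᵥ x) i) :=
    fun i _ => mul_nonneg (h.1 i) (sub_nonneg.2 (h.mulVec_le i))
  have hsum : ∑ i, x i * (V - (A *ᵥ x) i) = 0 := by
    simp only [mul_sub, Finset.sum_sub_distrib, ← Finset.sum_mul, h.2.1, one_mul]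
    exact sub_eq_zero.2 rfl
  have := (Finset.sum_eq_zero_iff_of_nonneg hgap).1 hsum j (Finset.mem_univ j)
  linarith [(mul_eq_zero.1 this).resolve_left hj.ne']

theorem mulVec_eq_const_of_pos (h : IsSymNash A x) (hx : ∀ j, 0 < x j) :
    A *ᵥ x = fun _ => x ⬝ᵥ (A *ᵥ x) :=
  funext fun j => h.mulVec_eq_of_pos (hx j)

theorem comp_perm (h : IsSymNash A x) (σ : Equiv.Perm (Fin 3)) :
    IsSymNash (A.submatrix σ σ) (x ∘ σ) := by
  obtain ⟨hx₀, hx₁, hbest⟩ := h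
  have hAx : A.submatrix σ σ *ᵥ (x ∘ σ) = (A *ᵥ x) ∘ σ := by
    simp [submatrix_mulVec_equiv, Function.comp_def]
  refine ⟨fun j => hx₀ (σ j), (Equiv.sum_comp σ x).trans hx₁, fun y hy₀ hy₁ => ?_⟩
  rw [hAx, comp_equiv_dotProduct_comp_equiv, ← comp_equiv_symm_dotProduct]
  exact hbest _ (fun j => hy₀ _) ((Equiv.sum_comp σ.symm y).trans hy₁)

end IsSymNash

section classA1

variable {a₁ a₂ a₃ : ℝ}

def classA1Matrix (a₁ a₂ a₃ : ℝ) : Matrix (Fin 3) (Fin 3) ℝ := !![0, 1, a₃; a₁, 0, 1; 1, a₂, 0]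

theorem classA1Matrix_mulVec (y : Fin 3 → ℝ) :
    classA1Matrix a₁ a₂ a₃ *ᵥ y = ![y 1 + a₃ * y 2, a₁ * y 0 + y 2, y 0 + a₂ * y 1] := by
  ext j
  fin_cases j <;> simp [classA1Matrix, mulVec, dotProduct, Fin.sum_univ_three]

theorem classA1Matrix_submatrix_finRotate :
    (classA1Matrix a₁ a₂ a₃).submatrix (finRotate 3) (finRotate 3) = classA1Matrix a₂ a₃ a₁ := by
  ext i j
  fin_cases i <;> fin_cases j <;> rfl

theorem classA1_pos_zero_of_isSymNash (ha₂ : a₂ ≤ 1) (ha₃ : 0 < a₃) {y : Fin 3 → ℝ}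
    (hy : IsSymNash (classA1Matrix a₁ a₂ a₃) y) : 0 < y 0 := by
  have hV : y ⬝ᵥ (classA1Matrix a₁ a₂ a₃ *ᵥ y) =
      y 0 * (y 1 + a₃ * y 2) + y 1 * (a₁ * y 0 + y 2) + y 2 * (y 0 + a₂ * y 1) := by
    simp [classA1Matrix_mulVec, dotProduct, Fin.sum_univ_three]
  have hsum : y 0 + y 1 + y 2 = 1 := by simpa [Fin.sum_univ_three] using hy.2.1
  have hbest₀ := hy.mulVec_le 0
  rw [hV, classA1Matrix_mulVec, cons_val_zero] at hbest₀
  refine (hy.1 0).lt_of_ne' fun h₀ => ?_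
  rcases (hy.1 2).eq_or_lt with h₂ | h₂
  · have h₁ : y 1 = 1 := by linarith
    norm_num [h₀, ← h₂, h₁] at hbest₀
  · have hbest₂ := hy.mulVec_eq_of_pos h₂
    rw [hV, classA1Matrix_mulVec] at hbest₂
    simp only [cons_val_two, Nat.succ_eq_add_one, Nat.reduceAdd, tail_cons, head_cons] at hbest₂
    nlinarith [mul_nonneg (sub_nonneg.2 ha₂) (hy.1 1), mul_pos ha₃ h₂]

theorem classA1_pos_of_isSymNash (h₁ : a₁ ∈ Set.Ioc (0 : ℝ) 1) (h₂ : a₂ ∈ Set.Ioc (0 : ℝ) 1)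
    (h₃ : a₃ ∈ Set.Ioc (0 : ℝ) 1) {y : Fin 3 → ℝ} (hy : IsSymNash (classA1Matrix a₁ a₂ a₃) y) :
    ∀ j, 0 < y j := by
  have hy' := hy.comp_perm (finRotate 3)
  rw [classA1Matrix_submatrix_finRotate] at hy'
  have hy'' := hy'.comp_perm (finRotate 3)
  rw [classA1Matrix_submatrix_finRotate] at hy''
  intro j
  fin_cases j
  · exact classA1_pos_zero_of_isSymNash h₂.2 h₃.1 hy
  · exact classA1_pos_zero_of_isSymNash h₃.2 h₁.1 hy'
  · exact classA1_pos_zero_of_isSymNash h₁.2 h₂.1 hy''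

def classA1Weights (a₁ a₂ a₃ : ℝ) : Fin 3 → ℝ :=
  ![1 - a₂ + a₂ * a₃, 1 - a₃ + a₃ * a₁, 1 - a₁ + a₁ * a₂]

noncomputable def classA1Equilibrium (a₁ a₂ a₃ : ℝ) : Fin 3 → ℝ :=
  (∑ j, classA1Weights a₁ a₂ a₃ j)⁻¹ • classA1Weights a₁ a₂ a₃

theorem classA1Matrix_mulVec_weights :
    classA1Matrix a₁ a₂ a₃ *ᵥ classA1Weights a₁ a₂ a₃ = fun _ => 1 + a₁ * a₂ * a₃ := by
  ext j
  fin_cases j <;> simp [classA1Matrix_mulVec, classA1Weights] <;> ring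

theorem classA1Weights_pos (h₁ : a₁ ∈ Set.Ioc (0 : ℝ) 1) (h₂ : a₂ ∈ Set.Ioc (0 : ℝ) 1)
    (h₃ : a₃ ∈ Set.Ioc (0 : ℝ) 1) (j : Fin 3) : 0 < classA1Weights a₁ a₂ a₃ j := by
  fin_cases j <;>
    simp only [classA1Weights, Fin.zero_eta, Fin.mk_one, Fin.reduceFinMk, Fin.isValue,
      cons_val_zero, cons_val_one, cons_val] <;>
    linarith [mul_pos h₁.1 h₂.1, mul_pos h₂.1 h₃.1, mul_pos h₃.1 h₁.1, h₁.2, h₂.2, h₃.2]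

theorem classA1Weights_sum_pos (h₁ : a₁ ∈ Set.Ioc (0 : ℝ) 1) (h₂ : a₂ ∈ Set.Ioc (0 : ℝ) 1)
    (h₃ : a₃ ∈ Set.Ioc (0 : ℝ) 1) : 0 < ∑ j, classA1Weights a₁ a₂ a₃ j :=
  Finset.sum_pos (fun j _ => classA1Weights_pos h₁ h₂ h₃ j) Finset.univ_nonempty

theorem isSymNash_classA1Equilibrium (h₁ : a₁ ∈ Set.Ioc (0 : ℝ) 1)
    (h₂ : a₂ ∈ Set.Ioc (0 : ℝ) 1) (h₃ : a₃ ∈ Set.Ioc (0 : ℝ) 1) :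
    IsSymNash (classA1Matrix a₁ a₂ a₃) (classA1Equilibrium a₁ a₂ a₃) := by
  have hD := classA1Weights_sum_pos h₁ h₂ h₃
  have hAx : classA1Matrix a₁ a₂ a₃ *ᵥ classA1Equilibrium a₁ a₂ a₃ =
      fun _ => (∑ j, classA1Weights a₁ a₂ a₃ j)⁻¹ * (1 + a₁ * a₂ * a₃) := by
    rw [classA1Equilibrium, mulVec_smul, classA1Matrix_mulVec_weights]
    rfl
  refine IsSymNash.of_mulVec_eq_const
    (fun j => smul_nonneg (inv_nonneg.2 hD.le) (classA1Weights_pos h₁ h₂ h₃ j).le) ?_ hAx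
  simp [classA1Equilibrium, ← Finset.mul_sum, hD.ne']

theorem eq_classA1Equilibrium_of_mulVec_eq_const {y : Fin 3 → ℝ} (hy : ∑ j, y j = 1) {c : ℝ}
    (hc : classA1Matrix a₁ a₂ a₃ *ᵥ y = fun _ => c) (hD : ∑ j, classA1Weights a₁ a₂ a₃ j ≠ 0) :
    y = classA1Equilibrium a₁ a₂ a₃ := by
  rw [classA1Matrix_mulVec] at hc
  have e₀ : y 1 + a₃ * y 2 = c := by simpa using congrFun hc 0
  have e₁ : a₁ * y 0 + y 2 = c := by simpa using congrFun hc 1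
  have e₂ : y 0 + a₂ * y 1 = c := by simpa using congrFun hc 2
  rw [Fin.sum_univ_three] at hy
  refine (eq_inv_smul_iff₀ hD).2 (funext fun j => ?_)
  fin_cases j <;>
    simp only [classA1Weights, Fin.sum_univ_three, Fin.zero_eta, Fin.mk_one, Fin.reduceFinMk,
      Fin.isValue, cons_val_zero, cons_val_one, cons_val, Pi.smul_apply, smul_eq_mul]
  · linear_combination (1 - a₂ - a₃) * (e₀ - e₁) + (a₃ - 2) * (e₀ - e₂) + (1 - a₂ + a₂ * a₃) * hy
  · linear_combination (1 + a₃) * (e₀ - e₁) + (1 - a₁ - a₃) * (e₀ - e₂) + (1 - a₃ + a₁ * a₃) * hy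
  · linear_combination (a₂ - 2) * (e₀ - e₁) + (1 + a₁) * (e₀ - e₂) + (1 - a₁ + a₁ * a₂) * hy

end classA1

/-- The symmetric game with the given payoff matrix has exactly one symmetric Nash
equilibrium, and it is completely mixed. -/
theorem classA1_unique_completely_mixed (a₁ a₂ a₃ : ℝ)
    (h₁ : a₁ ∈ Set.Ioo (0:ℝ) 1) (h₂ : a₂ ∈ Set.Ioo (0:ℝ) 1) (h₃ : a₃ ∈ Set.Ioo (0:ℝ) 1) :
    ∃ x : Fin 3 → ℝ, IsSymNash !![0, 1, a₃; a₁, 0, 1; 1, a₂, 0] x ∧ (∀ j, 0 < x j) ∧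
      ∀ y : Fin 3 → ℝ, IsSymNash !![0, 1, a₃; a₁, 0, 1; 1, a₂, 0] y → y = x := by
  replace h₁ := Set.Ioo_subset_Ioc_self h₁
  replace h₂ := Set.Ioo_subset_Ioc_self h₂
  replace h₃ := Set.Ioo_subset_Ioc_self h₃
  have hx := isSymNash_classA1Equilibrium h₁ h₂ h₃
  refine ⟨classA1Equilibrium a₁ a₂ a₃, hx, classA1_pos_of_isSymNash h₁ h₂ h₃ hx, fun y hy => ?_⟩
  exact eq_classA1Equilibrium_of_mulVec_eq_const hy.2.1
    (hy.mulVec_eq_const_of_pos (classA1_pos_of_isSymNash h₁ h₂ h₃ hy))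
    (classA1Weights_sum_pos h₁ h₂ h₃).ne'
end

section
/- Let a₁, a₂, a₃ ∈ (0,1) and let A₂ = [[0, 1, 1], [a₁, 0, a₃], [1, a₂, 0]]. Then there exists a vector x in the standard simplex of ℝ³ with all three coordinates strictly positive such that A₂x = (c,c,c)ᵀ for some c ∈ ℝ if and only if a₁ + a₃ > 1. -/
/-!
Writing `x = (x₀, x₁, x₂)`, the payoffs are `x₁ + x₂`, `a₁x₀ + a₃x₂` and `x₀ + a₂x₁`.
Equating the first and third gives `x₀ = (1 - a₂)x₁ + x₂`, and substituting into the second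
leaves the single relation `(1 - a₁(1 - a₂)) x₁ = (a₁ + a₃ - 1) x₂`. The coefficient on the
left is positive, so a positive solution forces `a₁ + a₃ > 1`; conversely the indifference
equations are then solved by the positive vector
`(1 - (1 - a₂)(1 - a₃), a₁ + a₃ - 1, 1 - a₁(1 - a₂))`, which only has to be normalised.
-/

open Matrix

section Simplex

variable {𝕜 n : Type*} [Field 𝕜] [LinearOrder 𝕜] [IsStrictOrderedRing 𝕜] [Fintype n]

theorem exists_simplex_mulVec_eq_const_of_pos [Nonempty n] (A : Matrix n n 𝕜) {v : n → 𝕜}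
    (hv : ∀ j, 0 < v j) {c : 𝕜} (hc : ∀ j, (A *ᵥ v) j = c) :
    ∃ x : n → 𝕜, (∀ j, 0 < x j) ∧ (∑ j, x j = 1) ∧ ∃ c : 𝕜, ∀ j, A.mulVec x j = c := by
  have hS : 0 < ∑ j, v j := Finset.sum_pos (fun j _ => hv j) Finset.univ_nonempty
  refine ⟨(∑ j, v j)⁻¹ • v, fun j => ?_, ?_, (∑ j, v j)⁻¹ * c, fun j => ?_⟩
  · exact smul_pos (inv_pos.mpr hS) (hv j)
  · simp only [Pi.smul_apply, smul_eq_mul, ← Finset.mul_sum, inv_mul_cancel₀ hS.ne']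
  · rw [mulVec_smul, Pi.smul_apply, hc, smul_eq_mul]

end Simplex

section ClassA2

variable {R : Type*} [CommRing R] (a₁ a₂ a₃ : R)

/-- The payoff matrix `A₂`. -/
abbrev classA2 : Matrix (Fin 3) (Fin 3) R := !![0, 1, 1; a₁, 0, a₃; 1, a₂, 0]

theorem classA2_mulVec (x : Fin 3 → R) :
    classA2 a₁ a₂ a₃ *ᵥ x = ![x 1 + x 2, a₁ * x 0 + a₃ * x 2, x 0 + a₂ * x 1] := by
  ext j
  fin_cases j <;> simp [mulVec, dotProduct, Fin.sum_univ_three]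

theorem classA2_relation_of_mulVec_eq_const {x : Fin 3 → R} {c : R}
    (hc : ∀ j, (classA2 a₁ a₂ a₃ *ᵥ x) j = c) :
    x 1 * (1 - a₁ * (1 - a₂)) = x 2 * (a₁ + a₃ - 1) := by
  have h₀ := hc 0
  have h₁ := hc 1
  have h₂ := hc 2
  simp only [classA2_mulVec, Matrix.cons_val] at h₀ h₁ h₂
  linear_combination h₀ - h₁ + a₁ * (h₂ - h₀)

/-- Up to scaling, the unique solution of the indifference equations. -/
def classA2Equilibrium : Fin 3 → R :=
  ![1 - (1 - a₂) * (1 - a₃), a₁ + a₃ - 1, 1 - a₁ * (1 - a₂)]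

theorem classA2_mulVec_equilibrium (j : Fin 3) :
    (classA2 a₁ a₂ a₃ *ᵥ classA2Equilibrium a₁ a₂ a₃) j = a₃ + a₁ * a₂ := by
  rw [classA2_mulVec]
  fin_cases j <;> simp [classA2Equilibrium] <;> ring

end ClassA2

/-- Condition for the existence of a completely mixed strategy (all coordinates strictly
positive, lying in the standard simplex of `ℝ³`) making the row player indifferent
between all three pure strategies. -/
theorem classA2_indifference_iff (a₁ a₂ a₃ : ℝ)
    (h₁ : a₁ ∈ Set.Ioo (0:ℝ) 1) (h₂ : a₂ ∈ Set.Ioo (0:ℝ) 1) (h₃ : a₃ ∈ Set.Ioo (0:ℝ) 1) :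
    (∃ x : Fin 3 → ℝ, (∀ j, 0 < x j) ∧ (∑ j, x j = 1) ∧
        ∃ c : ℝ, ∀ j, (!![0, 1, 1; a₁, 0, a₃; 1, a₂, 0]).mulVec x j = c) ↔
      1 < a₁ + a₃ := by
  obtain ⟨ha₁0, ha₁1⟩ := h₁
  obtain ⟨ha₂0, ha₂1⟩ := h₂
  obtain ⟨ha₃0, ha₃1⟩ := h₃
  have hk : 0 < 1 - a₁ * (1 - a₂) := by nlinarith
  constructor
  · rintro ⟨x, hx, -, c, hc⟩
    have hrel := classA2_relation_of_mulVec_eq_const a₁ a₂ a₃ hc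
    have hu : 0 < x 2 * (a₁ + a₃ - 1) := hrel ▸ mul_pos (hx 1) hk
    linarith [pos_of_mul_pos_right hu (hx 2).le]
  · intro h
    have hpos : ∀ j, 0 < classA2Equilibrium a₁ a₂ a₃ j := by
      intro j
      fin_cases j <;> simp [classA2Equilibrium] <;> nlinarith
    exact exists_simplex_mulVec_eq_const_of_pos _ hpos (classA2_mulVec_equilibrium a₁ a₂ a₃)
end

section
/- Let a₁, a₂, a₃ ∈ (0,1) with a₃ < 1 − a₁ < a₂, and let A₄ = [[0, 1, 1], [1, 0, 0], [a₁, a₂, a₃]]. Then the symmetric game with payoff matrix A₄ has exactly one symmetric Nash equilibrium x in the standard simplex of ℝ³, and this x has all three coordinates strictly positive. -/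
/-!
A symmetric equilibrium `y` is characterised by the best-response conditions: every pure strategy
earns at most the equilibrium payoff `v`, with equality on the support of `y`. For `A₄` the first
strategy must be played: otherwise it earns `1 ≤ v`, so the second strategy (earning `0`) is
unused and `y` is the pure third strategy, whose payoff is only `a₃ < 1`. Then `a₁ + a₂ > 1` rules
out dropping the third strategy and `a₁ + a₃ < 1` rules out dropping the second. So every
equilibrium is completely mixed, hence an equalizer: `A₄ y` is constant, which pins `y` down to
`(1/2, (1 - a₁ - a₃) / (2 (a₂ - a₃)), (a₂ - 1 + a₁) / (2 (a₂ - a₃)))`.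
-/

open Matrix

section Simplex

variable {ι : Type*} [Fintype ι] {y w : ι → ℝ}

theorem dotProduct_le_of_mem_stdSimplex {v : ℝ} (hy : y ∈ stdSimplex ℝ ι) (hw : ∀ i, w i ≤ v) :
    y ⬝ᵥ w ≤ v :=
  calc y ⬝ᵥ w = ∑ i, y i * w i := rfl
    _ ≤ ∑ i, y i * v := Finset.sum_le_sum fun i _ => mul_le_mul_of_nonneg_left (hw i) (hy.1 i)
    _ = v := by rw [← Finset.sum_mul, hy.2, one_mul]

theorem eq_dotProduct_of_forall_le_of_pos (hy : y ∈ stdSimplex ℝ ι)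
    (hw : ∀ i, w i ≤ y ⬝ᵥ w) {j : ι} (hj : 0 < y j) : w j = y ⬝ᵥ w := by
  have hsum : ∑ i, y i * (y ⬝ᵥ w - w i) = 0 := by
    simp only [mul_sub, Finset.sum_sub_distrib, ← Finset.sum_mul, hy.2, one_mul]
    exact sub_self _
  have hterm := (Finset.sum_eq_zero_iff_of_nonneg fun i _ =>
    mul_nonneg (hy.1 i) (sub_nonneg.mpr (hw i))).mp hsum j (Finset.mem_univ j)
  linarith [(mul_eq_zero.mp hterm).resolve_left hj.ne']

end Simplex

section SymmetricNash

variable {A : Matrix (Fin 3) (Fin 3) ℝ} {x : Fin 3 → ℝ}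

theorem isSymNash_iff_forall_mulVec_le :
    IsSymNash A x ↔ x ∈ stdSimplex ℝ (Fin 3) ∧ ∀ j, (A *ᵥ x) j ≤ x ⬝ᵥ (A *ᵥ x) := by
  refine ⟨fun ⟨h0, h1, hle⟩ => ⟨⟨h0, h1⟩, fun j => ?_⟩,
    fun ⟨hx, hle⟩ => ⟨hx.1, hx.2, fun y h0 h1 => dotProduct_le_of_mem_stdSimplex ⟨h0, h1⟩ hle⟩⟩
  have hj := single_mem_stdSimplex ℝ j
  simpa only [single_one_dotProduct] using hle _ hj.1 hj.2

theorem IsSymNash.mulVec_apply_eq_of_pos (hx : IsSymNash A x) {j : Fin 3} (hj : 0 < x j) :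
    (A *ᵥ x) j = x ⬝ᵥ (A *ᵥ x) :=
  have ⟨hmem, hle⟩ := isSymNash_iff_forall_mulVec_le.mp hx
  eq_dotProduct_of_forall_le_of_pos hmem hle hj

theorem isSymNash_of_mulVec_eq_const {c : ℝ} (hx : x ∈ stdSimplex ℝ (Fin 3))
    (hc : A *ᵥ x = fun _ => c) : IsSymNash A x := by
  have hval : x ⬝ᵥ (A *ᵥ x) = c := by
    rw [hc, dotProduct, ← Finset.sum_mul, hx.2, one_mul]
  exact isSymNash_iff_forall_mulVec_le.mpr ⟨hx, fun j => by rw [hval, hc]⟩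

theorem IsSymNash.mulVec_eq_const_of_pos_s11 (hx : IsSymNash A x) (hpos : ∀ j, 0 < x j) :
    A *ᵥ x = fun _ => x ⬝ᵥ (A *ᵥ x) :=
  funext fun j => hx.mulVec_apply_eq_of_pos (hpos j)

end SymmetricNash

section ClassA4

variable {a₁ a₂ a₃ : ℝ}

def classA4 (a₁ a₂ a₃ : ℝ) : Matrix (Fin 3) (Fin 3) ℝ :=
  !![0, 1, 1; 1, 0, 0; a₁, a₂, a₃]

theorem classA4_mulVec (y : Fin 3 → ℝ) :
    classA4 a₁ a₂ a₃ *ᵥ y = ![y 1 + y 2, y 0, a₁ * y 0 + a₂ * y 1 + a₃ * y 2] := by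
  ext j
  fin_cases j <;> simp [classA4, mulVec, dotProduct, Fin.sum_univ_three]

noncomputable def classA4Equilibrium (a₁ a₂ a₃ : ℝ) : Fin 3 → ℝ :=
  ![1 / 2, (1 - a₁ - a₃) / (2 * (a₂ - a₃)), (a₂ - 1 + a₁) / (2 * (a₂ - a₃))]

theorem classA4Equilibrium_pos (ha : a₃ < 1 - a₁) (hb : 1 - a₁ < a₂) (j : Fin 3) :
    0 < classA4Equilibrium a₁ a₂ a₃ j := by
  have hden : 0 < 2 * (a₂ - a₃) := by linarith
  fin_cases j
  · norm_num [classA4Equilibrium]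
  · exact div_pos (by linarith) hden
  · exact div_pos (by linarith) hden

theorem isSymNash_classA4Equilibrium (ha : a₃ < 1 - a₁) (hb : 1 - a₁ < a₂) :
    IsSymNash (classA4 a₁ a₂ a₃) (classA4Equilibrium a₁ a₂ a₃) := by
  have hden : a₂ - a₃ ≠ 0 := by linarith
  have hsum : ∑ j, classA4Equilibrium a₁ a₂ a₃ j = 1 := by
    simp only [Fin.sum_univ_three, classA4Equilibrium, cons_val]
    field_simp
    ring
  refine isSymNash_of_mulVec_eq_const (c := 1 / 2)
    ⟨fun j => (classA4Equilibrium_pos ha hb j).le, hsum⟩ ?_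
  rw [classA4_mulVec]
  ext j
  fin_cases j <;>
    simp only [classA4Equilibrium, Fin.zero_eta, Fin.mk_one, Fin.reduceFinMk, cons_val] <;>
    field_simp <;> ring

theorem IsSymNash.classA4_pos (ha₁ : 0 < a₁) (ha : a₃ < 1 - a₁) (hb : 1 - a₁ < a₂)
    {y : Fin 3 → ℝ} (hy : IsSymNash (classA4 a₁ a₂ a₃) y) (j : Fin 3) : 0 < y j := by
  obtain ⟨⟨hy0, hy1⟩, hle⟩ := isSymNash_iff_forall_mulVec_le.mp hy
  have heq := fun j => hy.mulVec_apply_eq_of_pos (j := j)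
  set v := y ⬝ᵥ (classA4 a₁ a₂ a₃ *ᵥ y)
  rw [classA4_mulVec] at hle heq
  simp only [Fin.sum_univ_three] at hy1
  have le0 : y 1 + y 2 ≤ v := hle 0
  have le1 : y 0 ≤ v := hle 1
  have le2 : a₁ * y 0 + a₂ * y 1 + a₃ * y 2 ≤ v := hle 2
  have eq0 : 0 < y 0 → y 1 + y 2 = v := heq 0
  have eq1 : 0 < y 1 → y 0 = v := heq 1
  have eq2 : 0 < y 2 → a₁ * y 0 + a₂ * y 1 + a₃ * y 2 = v := heq 2
  have pos0 : 0 < y 0 := by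
    by_contra! h0
    rcases (hy0 1).eq_or_lt with h1 | h1
    · have h2 : y 2 = 1 := by linarith [hy0 0]
      have := eq2 (by linarith)
      rw [← h1, h2, le_antisymm h0 (hy0 0)] at this
      linarith
    · linarith [eq1 h1]
  have hv : y 1 + y 2 = v := eq0 pos0
  have pos2 : 0 < y 2 := by
    by_contra! h2
    rcases (hy0 1).eq_or_lt with h1 | h1
    · linarith
    · have := eq1 h1
      nlinarith
  have pos1 : 0 < y 1 := by
    by_contra! h1
    nlinarith [eq2 pos2, mul_le_mul_of_nonneg_left le1 ha₁.le, mul_lt_mul_of_pos_right ha pos2]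
  fin_cases j
  exacts [pos0, pos1, pos2]

theorem IsSymNash.eq_classA4Equilibrium (ha₁ : 0 < a₁) (ha : a₃ < 1 - a₁) (hb : 1 - a₁ < a₂)
    {y : Fin 3 → ℝ} (hy : IsSymNash (classA4 a₁ a₂ a₃) y) : y = classA4Equilibrium a₁ a₂ a₃ := by
  have hconst := hy.mulVec_eq_const_of_pos_s11 (hy.classA4_pos ha₁ ha hb)
  set v := y ⬝ᵥ (classA4 a₁ a₂ a₃ *ᵥ y)
  rw [classA4_mulVec] at hconst
  have eq0 : y 1 + y 2 = v := congrFun hconst 0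
  have eq1 : y 0 = v := congrFun hconst 1
  have eq2 : a₁ * y 0 + a₂ * y 1 + a₃ * y 2 = v := congrFun hconst 2
  have hsum : y 0 + y 1 + y 2 = 1 := by simpa only [Fin.sum_univ_three] using hy.2.1
  have hden : 2 * (a₂ - a₃) ≠ 0 := by linarith
  have h0 : y 0 = 1 / 2 := by linarith
  have key : y 1 * (2 * (a₂ - a₃)) = 1 - a₁ - a₃ := by
    linear_combination 2 * eq2 - 2 * a₃ * eq0 - 2 * a₁ * h0 + (2 - 2 * a₃) * (h0 - eq1)
  have h1 : y 1 = (1 - a₁ - a₃) / (2 * (a₂ - a₃)) := (eq_div_iff hden).mpr key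
  have h2 : y 2 = (a₂ - 1 + a₁) / (2 * (a₂ - a₃)) := by
    rw [eq_div_iff hden]
    linear_combination 2 * (a₂ - a₃) * (eq0 + h0 - eq1) - key
  ext j
  fin_cases j
  exacts [h0, h1, h2]

end ClassA4

theorem classA4_unique_completely_mixed_general (a₁ a₂ a₃ : ℝ)
    (h₁ : a₁ ∈ Set.Ioo (0:ℝ) 1)
    (ha : a₃ < 1 - a₁) (hb : 1 - a₁ < a₂) :
    ∃ x : Fin 3 → ℝ, IsSymNash !![0, 1, 1; 1, 0, 0; a₁, a₂, a₃] x ∧ (∀ j, 0 < x j) ∧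
      ∀ y : Fin 3 → ℝ, IsSymNash !![0, 1, 1; 1, 0, 0; a₁, a₂, a₃] y → y = x :=
  ⟨classA4Equilibrium a₁ a₂ a₃, isSymNash_classA4Equilibrium ha hb, classA4Equilibrium_pos ha hb,
    fun _ hy => hy.eq_classA4Equilibrium h₁.1 ha hb⟩

/-- The symmetric game with the given payoff matrix has exactly one symmetric Nash
equilibrium, and it is completely mixed. -/
theorem classA4_unique_completely_mixed (a₁ a₂ a₃ : ℝ)
    (h₁ : a₁ ∈ Set.Ioo (0:ℝ) 1) (h₂ : a₂ ∈ Set.Ioo (0:ℝ) 1) (h₃ : a₃ ∈ Set.Ioo (0:ℝ) 1)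
    (ha : a₃ < 1 - a₁) (hb : 1 - a₁ < a₂) :
    ∃ x : Fin 3 → ℝ, IsSymNash !![0, 1, 1; 1, 0, 0; a₁, a₂, a₃] x ∧ (∀ j, 0 < x j) ∧
      ∀ y : Fin 3 → ℝ, IsSymNash !![0, 1, 1; 1, 0, 0; a₁, a₂, a₃] y → y = x :=
  classA4_unique_completely_mixed_general a₁ a₂ a₃ h₁ ha hb
end

section
/- Let a₁, a₂, a₃ ∈ (0,1) and let A₅ = [[0, a₂, 1], [1, 0, 0], [a₁, 1, a₃]]. Then there exists a vector x in the standard simplex of ℝ³ with all three coordinates strictly positive such that A₅x = (c,c,c)ᵀ for some c ∈ ℝ if and only if a₁ + a₃ < 1. -/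
/-!
The indifference equations `x₀ = c`, `a₂ x₁ + x₂ = x₀`, `a₁ x₀ + x₁ + a₃ x₂ = x₀` have, up to
scaling, the single solution `(1 - a₂a₃, 1 - a₁ - a₃, 1 - a₂(1 - a₁))`. Since `a₂a₃ < 1` and
`a₂(1 - a₁) < 1`, its first and last coordinates are positive, so it can be normalised into the
open simplex exactly when `1 - a₁ - a₃ > 0`.
-/

open Matrix

section Indifference

variable {ι : Type*} [Fintype ι]

def IsIndifferentMixedStrategy (A : Matrix ι ι ℝ) (x : ι → ℝ) : Prop :=
  (∀ j, 0 < x j) ∧ ∑ j, x j = 1 ∧ ∃ c, ∀ j, (A *ᵥ x) j = c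

theorem isIndifferentMixedStrategy_normalize [Nonempty ι] {A : Matrix ι ι ℝ} {v : ι → ℝ}
    {c : ℝ} (hv : ∀ j, 0 < v j) (hAv : ∀ j, (A *ᵥ v) j = c) :
    IsIndifferentMixedStrategy A ((∑ j, v j)⁻¹ • v) := by
  have hS : 0 < ∑ j, v j := Finset.sum_pos (fun j _ => hv j) Finset.univ_nonempty
  refine ⟨fun j => mul_pos (inv_pos.2 hS) (hv j), ?_, (∑ j, v j)⁻¹ * c, fun j => ?_⟩
  · simp only [Pi.smul_apply, smul_eq_mul, ← Finset.mul_sum, inv_mul_cancel₀ hS.ne']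
  · rw [mulVec_smul, Pi.smul_apply, hAv, smul_eq_mul]

end Indifference

section ClassA5

variable (a₁ a₂ a₃ : ℝ)

def classA5 : Matrix (Fin 3) (Fin 3) ℝ := !![0, a₂, 1; 1, 0, 0; a₁, 1, a₃]

def classA5Equalizer : Fin 3 → ℝ := ![1 - a₂ * a₃, 1 - a₁ - a₃, 1 - a₂ * (1 - a₁)]

theorem classA5_mulVec_equalizer (j : Fin 3) :
    (classA5 a₁ a₂ a₃ *ᵥ classA5Equalizer a₁ a₂ a₃) j = 1 - a₂ * a₃ := by
  fin_cases j <;> simp [classA5, classA5Equalizer, mulVec, dotProduct, Fin.sum_univ_three] <;> ring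

variable {a₁ a₂ a₃}

theorem classA5Equalizer_pos (ha₁ : 0 < a₁) (ha₂ : a₂ ∈ Set.Ioo 0 1) (ha₃ : a₃ < 1)
    (h : a₁ + a₃ < 1) (j : Fin 3) : 0 < classA5Equalizer a₁ a₂ a₃ j := by
  obtain ⟨ha₂, ha₂'⟩ := ha₂
  fin_cases j <;> simp only [classA5Equalizer, Fin.zero_eta, Fin.mk_one, Fin.reduceFinMk,
    Matrix.cons_val] <;> nlinarith

theorem classA5_mul_coord_one_eq {x : Fin 3 → ℝ} {c : ℝ}
    (hx : ∀ j, (classA5 a₁ a₂ a₃ *ᵥ x) j = c) :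
    (1 - a₂ * a₃) * x 1 = (1 - a₁ - a₃) * x 0 := by
  have e₀ := hx 0
  have e₁ := hx 1
  have e₂ := hx 2
  simp only [mulVec, dotProduct, classA5, Fin.isValue, of_apply, cons_val', cons_val_fin_one,
    cons_val_zero, Fin.sum_univ_three, zero_mul, cons_val_one, zero_add, cons_val, one_mul,
    add_zero] at e₀ e₁ e₂
  linear_combination e₂ - a₃ * e₀ + (a₃ - 1) * e₁

end ClassA5

/-- Condition for the existence of a completely mixed strategy (all coordinates strictly
positive, lying in the standard simplex of `ℝ³`) making the row player indifferent
between all three pure strategies. -/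
theorem classA5_indifference_iff (a₁ a₂ a₃ : ℝ)
    (h₁ : a₁ ∈ Set.Ioo (0:ℝ) 1) (h₂ : a₂ ∈ Set.Ioo (0:ℝ) 1) (h₃ : a₃ ∈ Set.Ioo (0:ℝ) 1) :
    (∃ x : Fin 3 → ℝ, (∀ j, 0 < x j) ∧ (∑ j, x j = 1) ∧
        ∃ c : ℝ, ∀ j, (!![0, a₂, 1; 1, 0, 0; a₁, 1, a₃]).mulVec x j = c) ↔
      a₁ + a₃ < 1 := by
  constructor
  · rintro ⟨x, hpos, -, c, hc⟩
    have hdet : 0 < 1 - a₂ * a₃ :=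
      sub_pos.2 (mul_lt_one_of_nonneg_of_lt_one_left h₂.1.le h₂.2 h₃.2.le)
    have hprod : 0 < (1 - a₁ - a₃) * x 0 :=
      classA5_mul_coord_one_eq (a₂ := a₂) hc ▸ mul_pos hdet (hpos 1)
    linarith [pos_of_mul_pos_left hprod (hpos 0).le]
  · intro h
    exact ⟨_, isIndifferentMixedStrategy_normalize (classA5Equalizer_pos h₁.1 h₂ h₃.2 h)
      (classA5_mulVec_equalizer a₁ a₂ a₃)⟩
end

section
/- Let a₁, a₂, a₃ ∈ (0,1) and let A₆ = [[0, 1, 0], [a₁, a₂, 1], [1, 0, a₃]]. If there exists a vector x in the standard simplex of ℝ³ with all three coordinates strictly positive such that A₆x = (c,c,c)ᵀ for some c ∈ ℝ, then a₁ + a₂ < 1. -/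
/-- Condition for the existence of a completely mixed strategy (all coordinates strictly
positive, lying in the standard simplex of `ℝ³`) making the row player indifferent
between all three pure strategies. -/
theorem classA6_indifference_necessary (a₁ a₂ a₃ : ℝ)
    (h₁ : a₁ ∈ Set.Ioo (0:ℝ) 1) (h₂ : a₂ ∈ Set.Ioo (0:ℝ) 1) (h₃ : a₃ ∈ Set.Ioo (0:ℝ) 1) :
    (∃ x : Fin 3 → ℝ, (∀ j, 0 < x j) ∧ (∑ j, x j = 1) ∧
        ∃ c : ℝ, ∀ j, (!![0, 1, 0; a₁, a₂, 1; 1, 0, a₃]).mulVec x j = c) →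
      a₁ + a₂ < 1 := by
  rintro ⟨x, hpos, hsum, c, hc⟩
  obtain ⟨ha₁, ha₁'⟩ := h₁
  obtain ⟨ha₂, ha₂'⟩ := h₂
  obtain ⟨ha₃, ha₃'⟩ := h₃
  have e0 := hc 0
  have e1 := hc 1
  have e2 := hc 2
  simp [Matrix.mulVec, dotProduct, Fin.sum_univ_three] at e0 e1 e2
  have p0 := hpos 0
  have p1 := hpos 1
  have p2 := hpos 2
  nlinarith [mul_pos p2 ha₁, mul_pos ha₁ ha₃, mul_pos (mul_pos ha₁ ha₃) p2]
end
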